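/- arXiv:1209.3112 — 2 statements merged into one kernel-verified Lean document; each statement's English description precedes it below -/
import Mathlib

section
/- In a covering random forest on H (every vertex of H belongs to some tree T(x), x ∈ ∂H, and T(x) ⊆ C(x)), if almost surely all but finitely many trees T(i) satisfy h(T(i)) < |i|, then there is a contradiction with full coverage of the cone C(0): there exist infinitely many vertices of C(0) not covered. Hence E[h(T(0))] = ∞ for the translation-invariant covering forest. -/
open MeasureTheory ENNReal

/-- The rotated upper half-plane lattice `H = {(x,y) : x + y even, y ≥ 0}`. -/
def Hlat : Set (ℤ × ℤ) := {v | Even (v.1 + v.2) ∧ 0 ≤ v.2}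

/-- The cone of `x`: all vertices `x + i·θ_l + j·θ_r`, `i,j ≥ 0`,
with `θ_l = (-1,1)`, `θ_r = (1,1)`. -/
def cone (x : ℤ × ℤ) : Set (ℤ × ℤ) :=
  {v | ∃ i j : ℕ, v = x + (i : ℤ) • ((-1, 1) : ℤ × ℤ) + (j : ℤ) • ((1, 1) : ℤ × ℤ)}

/-- The height of a tree: the supremum of the levels of its vertices. -/
noncomputable def treeHeight (S : Set (ℤ × ℤ)) : ℝ≥0∞ :=
  ⨆ v ∈ S, (v.2.toNat : ℝ≥0∞)

/-!
If `E[h(T(0))] < ∞` then `∑ₙ P(h(T(0)) ≥ n + 1) < ∞`, so by identical distribution and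
Borel–Cantelli almost surely only finitely many trees have `h(T(k)) ≥ |k| + 1`, and all heights
are finite. But the vertex `(0, 2n)` lies only in cones `C((2k, 0))` with `|k| ≤ n`, so for
`n ≥ 1` the tree covering it has `h(T(k)) ≥ 2n ≥ |k| + 1` and is one of those finitely many
trees; letting `n → ∞` makes one of them infinitely high.
-/

open ProbabilityTheory

lemma sum_range_indicator_add_one_le (c : ℝ≥0∞) (N : ℕ) :
    ∑ n ∈ Finset.range N, (if (n : ℝ≥0∞) + 1 ≤ c then (1 : ℝ≥0∞) else 0) ≤ c := by
  induction N with
  | zero => simp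
  | succ N ih =>
    by_cases hN : (N : ℝ≥0∞) + 1 ≤ c
    · calc ∑ n ∈ Finset.range (N + 1), (if (n : ℝ≥0∞) + 1 ≤ c then (1 : ℝ≥0∞) else 0)
          ≤ ∑ _n ∈ Finset.range (N + 1), (1 : ℝ≥0∞) :=
            Finset.sum_le_sum fun n _ => by split <;> simp
        _ = (N : ℝ≥0∞) + 1 := by simp
        _ ≤ c := hN
    · rwa [Finset.sum_range_succ, if_neg hN, add_zero]

lemma tsum_measure_add_one_le_le_lintegral {Ω : Type*} [MeasurableSpace Ω] (μ : Measure Ω)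
    {f : Ω → ℝ≥0∞} (hf : AEMeasurable f μ) :
    ∑' n : ℕ, μ {ω | (n : ℝ≥0∞) + 1 ≤ f ω} ≤ ∫⁻ ω, f ω ∂μ := by
  have hset (n : ℕ) : NullMeasurableSet {ω | (n : ℝ≥0∞) + 1 ≤ f ω} μ :=
    hf.nullMeasurable measurableSet_Ici
  calc ∑' n : ℕ, μ {ω | (n : ℝ≥0∞) + 1 ≤ f ω}
      = ∫⁻ ω, ∑' n : ℕ, {ω | (n : ℝ≥0∞) + 1 ≤ f ω}.indicator 1 ω ∂μ := by
        rw [lintegral_tsum (f := fun n : ℕ => {ω | (n : ℝ≥0∞) + 1 ≤ f ω}.indicator 1)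
          fun n => aemeasurable_one.indicator₀ (hset n)]
        exact tsum_congr fun n => (lintegral_indicator_one₀ (hset n)).symm
    _ ≤ ∫⁻ ω, f ω ∂μ := by
        refine lintegral_mono fun ω => ENNReal.tsum_le_of_sum_range_le fun N => ?_
        simpa only [Set.indicator_apply, Set.mem_ofPred_eq, Pi.one_apply]
          using sum_range_indicator_add_one_le (f ω) N

lemma tsum_int_natAbs_le (q : ℕ → ℝ≥0∞) : ∑' k : ℤ, q k.natAbs ≤ 2 * ∑' n : ℕ, q n := by
  have hrec : ∀ k : ℤ, q k.natAbs = Int.rec (motive := fun _ => ℝ≥0∞) q (fun n => q (n + 1)) k :=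
    fun k => by cases k <;> rfl
  rw [tsum_congr hrec, tsum_int_rec ENNReal.summable ENNReal.summable, two_mul]
  exact add_le_add le_rfl (ENNReal.tsum_comp_le_tsum_of_injective Nat.succ_injective q)

section IdentDistrib

variable {Ω : Type*} [MeasurableSpace Ω] {P : Measure Ω} {X : ℤ → Ω → ℝ≥0∞}

lemma ae_finite_setOf_natAbs_add_one_le (hX : ∀ k, IdentDistrib (X k) (X 0) P P)
    (hfin : ∫⁻ ω, X 0 ω ∂P ≠ ⊤) :
    ∀ᵐ ω ∂P, {k : ℤ | (k.natAbs : ℝ≥0∞) + 1 ≤ X k ω}.Finite := by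
  refine ae_finite_setOfPred_mem (lt_top_iff_ne_top.1 ?_)
  calc ∑' k : ℤ, P {ω | (k.natAbs : ℝ≥0∞) + 1 ≤ X k ω}
      = ∑' k : ℤ, P {ω | (k.natAbs : ℝ≥0∞) + 1 ≤ X 0 ω} :=
        tsum_congr fun k => (hX k).measure_mem_eq measurableSet_Ici
    _ ≤ 2 * ∑' n : ℕ, P {ω | (n : ℝ≥0∞) + 1 ≤ X 0 ω} :=
        tsum_int_natAbs_le fun n => P {ω | (n : ℝ≥0∞) + 1 ≤ X 0 ω}
    _ ≤ 2 * ∫⁻ ω, X 0 ω ∂P := by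
        gcongr
        exact tsum_measure_add_one_le_le_lintegral P (hX 0).aemeasurable_fst
    _ < ⊤ := ENNReal.mul_lt_top ofNat_lt_top hfin.lt_top

lemma ae_forall_ne_top (hX : ∀ k, IdentDistrib (X k) (X 0) P P) (hfin : ∫⁻ ω, X 0 ω ∂P ≠ ⊤) :
    ∀ᵐ ω ∂P, ∀ k, X k ω ≠ ⊤ :=
  ae_all_iff.2 fun k => (hX k).symm.ae_snd (measurableSet_singleton ⊤).compl
    (ae_lt_top' (hX 0).aemeasurable_fst hfin |>.mono fun _ => LT.lt.ne)

end IdentDistrib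

lemma le_treeHeight {S : Set (ℤ × ℤ)} {v : ℤ × ℤ} (hv : v ∈ S) :
    (v.2.toNat : ℝ≥0∞) ≤ treeHeight S :=
  le_iSup₂ (f := fun (v : ℤ × ℤ) (_ : v ∈ S) => (v.2.toNat : ℝ≥0∞)) v hv

lemma natAbs_le_of_mem_cone {k : ℤ} {n : ℕ} (h : ((0 : ℤ), (2 * n : ℤ)) ∈ cone (2 * k, 0)) :
    k.natAbs ≤ n := by
  obtain ⟨i, j, hij⟩ := h
  simp only [Prod.ext_iff, Prod.fst_add, Prod.snd_add, Prod.smul_mk, smul_eq_mul] at hij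
  omega

section Forest

variable {S : ℤ → Set (ℤ × ℤ)}

lemma exists_natAbs_le_treeHeight (hcone : ∀ k, S k ⊆ cone (2 * k, 0))
    (hcover : ∀ v ∈ Hlat, ∃ k, v ∈ S k) (n : ℕ) :
    ∃ k : ℤ, k.natAbs ≤ n ∧ ((2 * n : ℕ) : ℝ≥0∞) ≤ treeHeight (S k) := by
  have hv : ((0 : ℤ), (2 * n : ℤ)) ∈ Hlat := ⟨⟨n, by ring⟩, by positivity⟩
  obtain ⟨k, hk⟩ := hcover _ hv
  refine ⟨k, natAbs_le_of_mem_cone (hcone k hk), ?_⟩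
  simpa [show (2 * (n : ℤ)).toNat = 2 * n by omega] using le_treeHeight hk

lemma exists_treeHeight_eq_top (hcone : ∀ k, S k ⊆ cone (2 * k, 0))
    (hcover : ∀ v ∈ Hlat, ∃ k, v ∈ S k)
    (hfin : {k : ℤ | (k.natAbs : ℝ≥0∞) + 1 ≤ treeHeight (S k)}.Finite) :
    ∃ k, treeHeight (S k) = ⊤ := by
  by_contra! htop
  set M := hfin.toFinset.sup fun k => treeHeight (S k)
  have hM : M < ⊤ := (Finset.sup_lt_iff bot_lt_top).2 fun k _ => (htop k).lt_top
  obtain ⟨n, hn⟩ := ENNReal.exists_nat_gt hM.ne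
  obtain ⟨k, hkn, hk⟩ := exists_natAbs_le_treeHeight hcone hcover (n + 1)
  have hkM : treeHeight (S k) ≤ M := by
    refine Finset.le_sup (f := fun k => treeHeight (S k)) (hfin.mem_toFinset.2 ?_)
    exact le_trans (by norm_cast; omega) hk
  exact absurd (hk.trans hkM) (not_le.2 (hn.trans_le (by norm_cast; omega)))

end Forest

/-- In a covering random forest on `H` (every vertex of `H` belongs a.s. to some tree
`T(k)` rooted at `(2k,0)` with `T(k) ⊆ C((2k,0))`) whose tree heights are identically
distributed, the expected height is infinite: `E[h(T(0))] = ∞`.  (Otherwise, by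
Borel–Cantelli all but finitely many trees would satisfy `h(T(i)) < |i|`, leaving
infinitely many vertices of `C(0)` uncovered.) -/
theorem covering_forest_infinite_mean_height {Ω : Type*} [MeasurableSpace Ω]
    (P : Measure Ω) [IsProbabilityMeasure P] (T : ℤ → Ω → Set (ℤ × ℤ))
    (hcone : ∀ (k : ℤ) (ω : Ω), T k ω ⊆ cone (2 * k, 0))
    (hcover : ∀ᵐ ω ∂P, ∀ v ∈ Hlat, ∃ k, v ∈ T k ω)
    (hmeas : ∀ k, Measurable fun ω => treeHeight (T k ω))
    (hid : ∀ k : ℤ, Measure.map (fun ω => treeHeight (T k ω)) P =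
      Measure.map (fun ω => treeHeight (T 0 ω)) P) :
    ∫⁻ ω, treeHeight (T 0 ω) ∂P = ⊤ := by
  by_contra hfin
  have hident (k : ℤ) : IdentDistrib (fun ω => treeHeight (T k ω))
      (fun ω => treeHeight (T 0 ω)) P P :=
    ⟨(hmeas k).aemeasurable, (hmeas 0).aemeasurable, hid k⟩
  obtain ⟨ω, hcov, hF, hne⟩ := (hcover.and ((ae_finite_setOf_natAbs_add_one_le hident hfin).and
    (ae_forall_ne_top hident hfin))).exists
  obtain ⟨k, hk⟩ := exists_treeHeight_eq_top (hcone · ω) hcov hF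
  exact hne k hk
end

section
/- In first passage percolation on H where edge weights decrease exponentially with level, ω(e) ~ Exp(2^{h(e)}), almost surely the geodesic tree T(0) rooted at the origin is finite: there exist boundary vertices v_l < 0 < v_r such that the entire rays {v_l + i·θ_r : i ≥ 0} and {v_r + i·θ_l : i ≥ 0} avoid T(0), confining T(0) to a finite triangle. -/
/-!
A vertex of `T(0)` other than the origin has its parent in `T(0)`, because a prefix of a
geodesic is a geodesic. Hence, by induction on the level (and parity), `T(0)` stays strictly
inside the triangle cut out by any two boundary rays it avoids, one on each side of the origin.

A boundary ray is itself a monotone path, so it avoids `T(0)` as soon as all its partial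
weights are smaller than both weights of the edges leaving the origin, which every geodesic from
the origin pays. The `j`-th edge of the ray from `(-2(n+1), 0)` has level `j + 1`, so it is at
most `ε (j+1) / 2^(j+1)` except with probability `exp (-ε (j+1))`. These failure probabilities
are summable, so the event that this holds along the whole ray has probability bounded below
uniformly in `n`; the rays being disjoint, these events are independent, and by the second
Borel–Cantelli lemma some ray realises it. Its total weight is then at most `2 ε`.
-/

open MeasureTheory ProbabilityTheory

def IsExpRV {Ω : Type*} [MeasurableSpace Ω] (P : Measure Ω) (X : Ω → ℝ) (r : ℝ) : Prop :=
  ∀ t : ℝ, 0 ≤ t → P {ω | t < X ω} = ENNReal.ofReal (Real.exp (-(r * t)))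

/-- The boundary `∂H = {(x,0) : x even}`. -/
def bdH : Set (ℤ × ℤ) := {v | Even v.1 ∧ v.2 = 0}

/-- The directed lattice step: from `u` to `u + θ_l` or `u + θ_r`,
with `θ_l = (-1,1)`, `θ_r = (1,1)`. -/
def latStep (u v : ℤ × ℤ) : Prop := v = u + (-1, 1) ∨ v = u + (1, 1)

/-- The level of an edge `e = (u,w)` : the maximum of the levels of its endpoints. -/
def edgeLevel (e : (ℤ × ℤ) × (ℤ × ℤ)) : ℤ := max e.1.2 e.2.2

/-- A monotone path from the boundary `∂H` to `y`: a nonempty list of vertices starting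
at a boundary vertex, ending at `y`, following directed lattice steps. -/
def IsMonoPath (γ : List (ℤ × ℤ)) (y : ℤ × ℤ) : Prop :=
  γ ≠ [] ∧ (∃ x ∈ bdH, γ.head? = some x) ∧ γ.getLast? = some y ∧ γ.Chain' latStep

/-- The list of (directed) edges of a path. -/
def pathEdges (γ : List (ℤ × ℤ)) : List ((ℤ × ℤ) × (ℤ × ℤ)) := γ.zip γ.tail

/-- The weight `λ(γ) = ∑_{e ∈ γ} ω(e)` of a path under the edge-weight configuration. -/
def pathWeight {Ω : Type*} (w : (ℤ × ℤ) × (ℤ × ℤ) → Ω → ℝ)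
    (γ : List (ℤ × ℤ)) (a : Ω) : ℝ :=
  ((pathEdges γ).map fun e => w e a).sum

/-- The first-passage distance `d_ω(y, ∂H)`: the infimum of weights of monotone paths
from the boundary to `y`. -/
noncomputable def fppDist {Ω : Type*} (w : (ℤ × ℤ) × (ℤ × ℤ) → Ω → ℝ)
    (y : ℤ × ℤ) (a : Ω) : ℝ :=
  sInf {r | ∃ γ, IsMonoPath γ y ∧ pathWeight w γ a = r}

/-- The geodesic tree rooted at the origin: the set of vertices `y` reached by a monotone
path from `(0,0)` whose weight realizes `d_ω(y, ∂H)`. -/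
def geoTree {Ω : Type*} (w : (ℤ × ℤ) × (ℤ × ℤ) → Ω → ℝ) (a : Ω) : Set (ℤ × ℤ) :=
  {y | ∃ γ, IsMonoPath γ y ∧ γ.head? = some ((0 : ℤ), (0 : ℤ)) ∧
    pathWeight w γ a = fppDist w y a}

open Filter Function
open scoped ENNReal

lemma latStep_snd {u v : ℤ × ℤ} (h : latStep u v) : v.2 = u.2 + 1 := by
  rcases h with rfl | rfl <;> simp

lemma latStep_add {d : ℤ × ℤ} (hd : d = (-1, 1) ∨ d = (1, 1)) (u : ℤ × ℤ) :
    latStep u (u + d) :=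
  hd.imp (congrArg (u + ·)) (congrArg (u + ·))

lemma pathEdges_append_singleton {δ : List (ℤ × ℤ)} {u : ℤ × ℤ} (hδ : δ.getLast? = some u)
    (y : ℤ × ℤ) : pathEdges (δ ++ [y]) = pathEdges δ ++ [(u, y)] := by
  induction δ with
  | nil => simp at hδ
  | cons x t ih =>
    cases t with
    | nil => simp_all [pathEdges]
    | cons z s =>
      rw [List.getLast?_cons_cons] at hδ
      exact congrArg ((x, z) :: ·) (ih hδ)

lemma pathWeight_append_singleton {Ω : Type*} (w : (ℤ × ℤ) × (ℤ × ℤ) → Ω → ℝ) (a : Ω)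
    {δ : List (ℤ × ℤ)} {u : ℤ × ℤ} (hδ : δ.getLast? = some u) (y : ℤ × ℤ) :
    pathWeight w (δ ++ [y]) a = pathWeight w δ a + w (u, y) a := by
  simp [pathWeight, pathEdges_append_singleton hδ]

lemma latStep_of_mem_pathEdges {γ : List (ℤ × ℤ)} (h : γ.IsChain latStep) :
    ∀ e ∈ pathEdges γ, latStep e.1 e.2 := by
  induction γ with
  | nil => simp [pathEdges]
  | cons x t ih =>
    cases t with
    | nil => simp [pathEdges]
    | cons z s =>
      rw [List.isChain_cons_cons] at h
      intro e he
      rcases List.mem_cons.1 (he : e ∈ (x, z) :: pathEdges (z :: s)) with rfl | he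
      exacts [h.1, ih h.2 e he]

lemma IsMonoPath.snd_nonneg {γ : List (ℤ × ℤ)} {y : ℤ × ℤ} (h : IsMonoPath γ y) : 0 ≤ y.2 := by
  obtain ⟨hne, ⟨x, hx, hhead⟩, hlast, hchain⟩ := h
  refine List.IsChain.induction (fun z : ℤ × ℤ => 0 ≤ z.2) γ hchain
    (fun u v huv hu => by rw [latStep_snd huv]; omega) (fun hne' => ?_) y
    (List.mem_of_getLast? hlast)
  rw [(List.head_eq_iff_head?_eq_some hne').2 hhead, hx.2]

lemma IsMonoPath.append_singleton {δ : List (ℤ × ℤ)} {u y : ℤ × ℤ} (hδ : IsMonoPath δ u)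
    (huy : latStep u y) : IsMonoPath (δ ++ [y]) y := by
  obtain ⟨hne, ⟨x, hx, hhead⟩, hlast, hchain⟩ := hδ
  refine ⟨by simp, ⟨x, hx, by rwa [List.head?_append_of_ne_nil _ hne]⟩, List.getLast?_concat,
    List.IsChain.append hchain (List.isChain_singleton y) ?_⟩
  simp_all

lemma IsMonoPath.eq_singleton_or_append_singleton {γ : List (ℤ × ℤ)} {y : ℤ × ℤ}
    (h : IsMonoPath γ y) :
    γ = [y] ∨ ∃ δ u, γ = δ ++ [y] ∧ IsMonoPath δ u ∧ latStep u y ∧ δ.head? = γ.head? := by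
  obtain ⟨hne, ⟨x, hx, hhead⟩, hlast, hchain⟩ := h
  obtain ⟨δ, rfl⟩ : ∃ δ, γ = δ ++ [y] := by
    obtain ⟨δ, b, rfl⟩ := (List.eq_nil_or_concat γ).resolve_left hne
    simp_all
  obtain rfl | hδ := eq_or_ne δ []
  · exact Or.inl rfl
  obtain ⟨u, hu⟩ := Option.ne_none_iff_exists'.1 (List.getLast?_eq_none_iff.not.2 hδ)
  have hchain' : δ.IsChain latStep ∧ latStep u y := by
    have := List.isChain_append.1 hchain
    exact ⟨this.1, this.2.2 u hu y rfl⟩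
  rw [List.head?_append_of_ne_nil _ hδ] at hhead ⊢
  exact Or.inr ⟨δ, u, rfl, ⟨hδ, ⟨x, hx, hhead⟩, hu, hchain'.1⟩, hchain'.2, rfl⟩

lemma geoTree_eq_origin_of_snd_nonpos {Ω : Type*} {w : (ℤ × ℤ) × (ℤ × ℤ) → Ω → ℝ} {a : Ω}
    {y : ℤ × ℤ} (hy : y ∈ geoTree w a) (h : y.2 ≤ 0) : y = (0, 0) := by
  obtain ⟨γ, hγ, hhead, -⟩ := hy
  obtain rfl | ⟨δ, u, -, hδ, huy, -⟩ := hγ.eq_singleton_or_append_singleton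
  · simpa using hhead
  · have := hδ.snd_nonneg
    rw [latStep_snd huy] at h
    omega

section Geodesics

variable {Ω : Type*} {w : (ℤ × ℤ) × (ℤ × ℤ) → Ω → ℝ} {a : Ω}
  (hw : ∀ e : (ℤ × ℤ) × (ℤ × ℤ), latStep e.1 e.2 → 0 ≤ w e a)
include hw

lemma pathWeight_nonneg {γ : List (ℤ × ℤ)} (h : γ.IsChain latStep) : 0 ≤ pathWeight w γ a :=
  List.sum_nonneg fun _ hr => by
    obtain ⟨e, he, rfl⟩ := List.mem_map.1 hr
    exact hw e (latStep_of_mem_pathEdges h e he)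

lemma fppDist_le_pathWeight {γ : List (ℤ × ℤ)} {y : ℤ × ℤ} (h : IsMonoPath γ y) :
    fppDist w y a ≤ pathWeight w γ a :=
  csInf_le ⟨0, by rintro _ ⟨ρ, hρ, rfl⟩; exact pathWeight_nonneg hw hρ.2.2.2⟩ ⟨γ, h, rfl⟩

lemma fppDist_le_fppDist_add {δ : List (ℤ × ℤ)} {u y : ℤ × ℤ} (hδ : IsMonoPath δ u)
    (huy : latStep u y) : fppDist w y a ≤ fppDist w u a + w (u, y) a := by
  rw [← sub_le_iff_le_add]
  refine le_csInf ⟨_, δ, hδ, rfl⟩ ?_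
  rintro _ ⟨ρ, hρ, rfl⟩
  rw [sub_le_iff_le_add, ← pathWeight_append_singleton w a hρ.2.2.1]
  exact fppDist_le_pathWeight hw (hρ.append_singleton huy)

lemma geoTree_exists_parent {y : ℤ × ℤ} (hy : y ∈ geoTree w a) (hy2 : 0 < y.2) :
    ∃ u ∈ geoTree w a, latStep u y := by
  obtain ⟨γ, hγ, hhead, hgeo⟩ := hy
  obtain rfl | ⟨δ, u, rfl, hδ, huy, hδhead⟩ := hγ.eq_singleton_or_append_singleton
  · simp_all
  refine ⟨u, ⟨δ, hδ, hδhead.trans hhead, le_antisymm ?_ (fppDist_le_pathWeight hw hδ)⟩, huy⟩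
  have := fppDist_le_fppDist_add hw hδ huy
  rw [← hgeo, pathWeight_append_singleton w a hδ.2.2.1] at this
  linarith

lemma exists_latStep_le_pathWeight {γ : List (ℤ × ℤ)} {x y : ℤ × ℤ} (hγ : IsMonoPath γ y)
    (hhead : γ.head? = some x) (hy : y ≠ x) : ∃ z, latStep x z ∧ w (x, z) a ≤ pathWeight w γ a := by
  obtain ⟨-, -, hlast, hchain⟩ := hγ
  match γ, hhead, hlast, hchain with
  | [_], rfl, hlast, _ => simp at hlast; exact absurd hlast.symm hy
  | _ :: z :: t, rfl, _, hchain =>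
    rw [List.Chain', List.isChain_cons_cons] at hchain
    refine ⟨z, hchain.1, ?_⟩
    have : pathWeight w (x :: z :: t) a = w (x, z) a + pathWeight w (z :: t) a := rfl
    linarith [pathWeight_nonneg hw hchain.2]

end Geodesics

def rayEdge (v d : ℤ × ℤ) (j : ℕ) : (ℤ × ℤ) × (ℤ × ℤ) :=
  (v + (j : ℤ) • d, v + ((j + 1 : ℕ) : ℤ) • d)

def rayPath (v d : ℤ × ℤ) (i : ℕ) : List (ℤ × ℤ) :=
  (List.range (i + 1)).map fun j : ℕ => v + (j : ℤ) • d

lemma rayEdge_snd (v d : ℤ × ℤ) (j : ℕ) : (rayEdge v d j).2 = (rayEdge v d j).1 + d := by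
  simp only [rayEdge]; push_cast; rw [add_smul, one_smul, add_assoc]

lemma latStep_rayEdge {d : ℤ × ℤ} (hd : d = (-1, 1) ∨ d = (1, 1)) (v : ℤ × ℤ) (j : ℕ) :
    latStep (rayEdge v d j).1 (rayEdge v d j).2 := by
  rw [rayEdge_snd]; exact latStep_add hd _

lemma edgeLevel_rayEdge {v d : ℤ × ℤ} (hv : v.2 = 0) (hd : d.2 = 1) (j : ℕ) :
    edgeLevel (rayEdge v d j) = j + 1 := by
  simp [edgeLevel, rayEdge, hv, hd]

lemma rayPath_succ (v d : ℤ × ℤ) (i : ℕ) :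
    rayPath v d (i + 1) = rayPath v d i ++ [(rayEdge v d i).2] := by
  rw [rayPath, List.range_succ, List.map_append]; rfl

lemma rayPath_getLast? (v d : ℤ × ℤ) (i : ℕ) :
    (rayPath v d i).getLast? = some (v + (i : ℤ) • d) := by
  rw [rayPath, List.range_succ, List.map_append, List.map_singleton, List.getLast?_concat]

lemma rayPath_isMonoPath {v d : ℤ × ℤ} (hv : v ∈ bdH) (hd : d = (-1, 1) ∨ d = (1, 1)) (i : ℕ) :
    IsMonoPath (rayPath v d i) (v + (i : ℤ) • d) := by
  refine ⟨by simp [rayPath], ⟨v, hv, by simp [rayPath, List.range_succ_eq_map]⟩,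
    rayPath_getLast? v d i, ?_⟩
  rw [List.Chain', rayPath, List.isChain_map, List.isChain_range_succ]
  exact fun j _ => latStep_rayEdge hd v j

lemma pathWeight_rayPath {Ω : Type*} (w : (ℤ × ℤ) × (ℤ × ℤ) → Ω → ℝ) (a : Ω) (v d : ℤ × ℤ)
    (i : ℕ) : pathWeight w (rayPath v d i) a = ∑ j ∈ Finset.range i, w (rayEdge v d j) a := by
  induction i with
  | zero => rfl
  | succ i ih =>
    rw [rayPath_succ, pathWeight_append_singleton w a (rayPath_getLast? v d i), ih,
      Finset.sum_range_succ]
    rfl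

theorem notMem_geoTree_of_sum_rayEdge_le {Ω : Type*} {w : (ℤ × ℤ) × (ℤ × ℤ) → Ω → ℝ} {a : Ω}
    (hw : ∀ e : (ℤ × ℤ) × (ℤ × ℤ), latStep e.1 e.2 → 0 ≤ w e a) {v d : ℤ × ℤ} (hv : v ∈ bdH)
    (hv0 : v.1 ≠ 0) (hd : d = (-1, 1) ∨ d = (1, 1)) {M : ℝ}
    (hray : ∀ i, ∑ j ∈ Finset.range i, w (rayEdge v d j) a ≤ M)
    (horigin : ∀ z, latStep (0, 0) z → M < w ((0, 0), z) a) (i : ℕ) :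
    v + (i : ℤ) • d ∉ geoTree w a := by
  rintro ⟨γ, hγ, hhead, hgeo⟩
  have hy : v + (i : ℤ) • d ≠ (0, 0) := by
    rcases hd with rfl | rfl <;> simp [Prod.ext_iff, hv.2] <;> omega
  obtain ⟨z, hz, hle⟩ := exists_latStep_le_pathWeight hw hγ hhead hy
  have := fppDist_le_pathWeight hw (rayPath_isMonoPath hv hd i)
  rw [pathWeight_rayPath] at this
  linarith [hray i, horigin z hz]

section Triangle

variable {S : Set (ℤ × ℤ)} (hroot : ∀ y ∈ S, y.2 ≤ 0 → y = (0, 0))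
  (hparent : ∀ y ∈ S, 0 < y.2 → ∃ u ∈ S, latStep u y)
  {vl vr : ℤ × ℤ} (hvl : vl ∈ bdH) (hvr : vr ∈ bdH) (hvl0 : vl.1 < 0) (hvr0 : 0 < vr.1)
  (hl : ∀ i : ℕ, vl + (i : ℤ) • ((1, 1) : ℤ × ℤ) ∉ S)
  (hr : ∀ i : ℕ, vr + (i : ℤ) • ((-1, 1) : ℤ × ℤ) ∉ S)
include hroot hparent hvl hvr hvl0 hvr0 hl hr

lemma mem_triangle_of_parent_closed :
    ∀ y ∈ S, 0 ≤ y.2 ∧ Even (y.1 + y.2) ∧ vl.1 < y.1 - y.2 ∧ y.1 + y.2 < vr.1 := by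
  suffices key : ∀ k : ℕ, ∀ y ∈ S, y.2 = k →
      Even (y.1 + y.2) ∧ vl.1 < y.1 - y.2 ∧ y.1 + y.2 < vr.1 by
    intro y hy
    have : 0 ≤ y.2 := by
      by_contra h; simp [hroot y hy (by omega)] at h
    exact ⟨this, key y.2.toNat y hy (by omega)⟩
  intro k
  induction k with
  | zero =>
    intro y hy hk
    obtain rfl := hroot y hy (by omega)
    simpa using ⟨hvl0, hvr0⟩
  | succ k ih =>
    intro y hy hk
    obtain ⟨u, hu, huy⟩ := hparent y hy (by omega)
    obtain ⟨hu_even, hu_l, hu_r⟩ := ih u hu (by rw [latStep_snd huy] at hk; omega)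
    have hy_l : y.1 - y.2 ≠ vl.1 := fun h => hl y.2.toNat (by
      convert hy using 1
      ext <;> simp [hvl.2] <;> omega)
    have hy_r : y.1 + y.2 ≠ vr.1 := fun h => hr y.2.toNat (by
      convert hy using 1
      ext <;> simp [hvr.2] <;> omega)
    have hvl_even := Int.even_iff.1 hvl.1
    have hvr_even := Int.even_iff.1 hvr.1
    rw [Int.even_iff] at hu_even ⊢
    -- by parity `u` lies at least two units inside both rays, so `y` is inside or on one of them
    rcases huy with rfl | rfl <;> simp only [Prod.fst_add, Prod.snd_add] at * <;> omega

lemma finite_of_parent_closed : S.Finite := by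
  refine ((Set.finite_Icc vl.1 vr.1).prod (Set.finite_Icc 0 (vr.1 - vl.1))).subset ?_
  intro y hy
  obtain ⟨h0, -, h1, h2⟩ := mem_triangle_of_parent_closed hroot hparent hvl hvr hvl0 hvr0 hl hr y hy
  simp only [Set.mem_prod, Set.mem_Icc]
  omega

end Triangle

lemma one_sub_measure_compl_le {Ω : Type*} [MeasurableSpace Ω] (μ : Measure Ω)
    [IsProbabilityMeasure μ] (s : Set Ω) : 1 - μ sᶜ ≤ μ s := by
  rw [tsub_le_iff_right, ← measure_univ (μ := μ), ← Set.union_compl_self s]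
  exact measure_union_le s sᶜ

section Independence

variable {Ω ι : Type*} {mΩ : MeasurableSpace Ω} {μ : Measure Ω} {m : ι → MeasurableSpace Ω}

theorem ProbabilityTheory.iIndep.iSup_of_pairwise_disjoint {κ : Type*} (h_le : ∀ i, m i ≤ mΩ)
    (h : iIndep m μ) {K : κ → Set ι} (hK : Pairwise (Disjoint on K)) :
    iIndep (fun k => ⨆ i ∈ K k, m i) μ := by
  classical
  have := h.isProbabilityMeasure
  refine (iIndep_iff _ μ).2 fun s f hf => ?_
  induction s using Finset.induction_on with
  | empty => simp
  | insert k s hks ih =>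
    rw [Finset.set_biInter_insert, Finset.prod_insert hks,
      ← ih fun k' hk' => hf k' (Finset.mem_insert_of_mem hk')]
    have hdisj : Disjoint (K k) (⋃ k' ∈ s, K k') :=
      Set.disjoint_iUnion₂_right.2 fun k' hk' => hK (ne_of_mem_of_not_mem hk' hks).symm
    refine (Indep_iff _ _ μ).1 (indep_iSup_of_disjoint h_le h hdisj) _ _
      (hf k (Finset.mem_insert_self k s)) (Finset.measurableSet_biInter s fun k' hk' => ?_)
    have hle : ⨆ i ∈ K k', m i ≤ ⨆ i ∈ ⋃ k' ∈ s, K k', m i :=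
      biSup_mono fun i hi => Set.mem_biUnion hk' hi
    exact hle _ (hf k' (Finset.mem_insert_of_mem hk'))

theorem ProbabilityTheory.iIndep.le_measure_iInter {m : ℕ → MeasurableSpace Ω}
    (h_le : ∀ j, m j ≤ mΩ) (h : iIndep m μ) {C : ℕ → Set Ω} (hC : ∀ j, MeasurableSet[m j] (C j))
    (J : ℕ) : (∏ j ∈ Finset.range J, μ (C j)) * (1 - ∑' j, μ (C (j + J))ᶜ) ≤ μ (⋂ j, C j) := by
  have := h.isProbabilityMeasure
  have hsplit : ⋂ j, C j = (⋂ j ∈ Finset.range J, C j) ∩ ⋂ j ∈ {j | J ≤ j}, C j := by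
    ext ω
    simp only [Set.mem_iInter, Set.mem_inter_iff, Finset.mem_range, Set.mem_ofPred_eq]
    exact ⟨fun hω => ⟨fun j _ => hω j, fun j _ => hω j⟩,
      fun hω j => (lt_or_ge j J).elim (hω.1 j) (hω.2 j)⟩
  have hdisj : Disjoint (Finset.range J : Set ℕ) {j | J ≤ j} :=
    Set.disjoint_left.2 fun j hj hj' => by
      simp only [Finset.coe_range, Set.mem_Iio, Set.mem_ofPred_eq] at hj hj'; omega
  have hle (T : Set ℕ) : ∀ j ∈ T, m j ≤ ⨆ j ∈ T, m j := fun j hj =>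
    le_iSup₂ (f := fun j _ => m j) j hj
  rw [hsplit, (Indep_iff _ _ μ).1 (indep_iSup_of_disjoint h_le h hdisj) _ _
    (Finset.measurableSet_biInter _ fun j hj => hle _ j hj _ (hC j))
    (.biInter (Set.to_countable _) fun j hj => hle _ j hj _ (hC j)),
    h.meas_biInter fun j _ => hC j]
  gcongr
  refine le_trans (tsub_le_tsub_left ?_ 1) (one_sub_measure_compl_le μ _)
  calc μ (⋂ j ∈ {j | J ≤ j}, C j)ᶜ ≤ μ (⋃ j, (C (j + J))ᶜ) := by
        refine measure_mono fun ω hω => ?_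
        simp only [Set.compl_iInter, Set.mem_iUnion, Set.mem_ofPred_eq] at hω ⊢
        obtain ⟨j, hj, hω⟩ := hω
        exact ⟨j - J, by rwa [Nat.sub_add_cancel hj]⟩
    _ ≤ ∑' j, μ (C (j + J))ᶜ := measure_iUnion_le _

theorem ProbabilityTheory.iIndep.ae_exists_forall_mem (h_le : ∀ i, m i ≤ mΩ) (h : iIndep m μ)
    {E : ℕ → ℕ → ι} (hE : Injective (uncurry E)) {C : ℕ → ℕ → Set Ω}
    (hC : ∀ n j, MeasurableSet[m (E n j)] (C n j)) {p : ℕ → ℝ≥0∞} (hp_lt : ∀ j, p j < 1)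
    (hp : ∑' j, p j ≠ ∞) (hCp : ∀ n j, μ (C n j)ᶜ ≤ p j) :
    ∀ᵐ ω ∂μ, ∃ n, ∀ j, ω ∈ C n j := by
  have := h.isProbabilityMeasure
  have hle n j : m (E n j) ≤ ⨆ i ∈ Set.range (E n), m i :=
    le_iSup₂ (f := fun i _ => m i) (E n j) ⟨j, rfl⟩
  have hB n : MeasurableSet[⨆ i ∈ Set.range (E n), m i] (⋂ j, C n j) :=
    .iInter fun j => hle n j _ (hC n j)
  have hBmeas n : MeasurableSet (⋂ j, C n j) := iSup₂_le (fun i _ => h_le i) _ (hB n)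
  have hrows : iIndepSet (fun n => ⋂ j, C n j) μ := by
    refine (iIndepSet_iff_iIndep _ μ).2 (iIndep_of_iIndep_of_le
      (h.iSup_of_pairwise_disjoint h_le (K := fun n => Set.range (E n)) ?_)
      fun n => MeasurableSpace.generateFrom_le fun s hs => hs ▸ hB n)
    refine fun n n' hnn' => Set.disjoint_left.2 ?_
    rintro _ ⟨j, rfl⟩ ⟨j', hj'⟩
    exact hnn' (congrArg Prod.fst (hE (a₁ := (n', j')) (a₂ := (n, j)) hj')).symm
  obtain ⟨c, hc, hrow_lb⟩ : ∃ c ≠ 0, ∀ n, c ≤ μ (⋂ j, C n j) := by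
    obtain ⟨J, hJ⟩ : ∃ J, ∑' j, p (j + J) < 1 :=
      ((ENNReal.tendsto_sum_nat_add p hp).eventually (gt_mem_nhds one_pos)).exists
    refine ⟨(∏ j ∈ Finset.range J, (1 - p j)) * (1 - ∑' j, p (j + J)),
      mul_ne_zero (Finset.prod_ne_zero_iff.2 fun j _ => (tsub_pos_of_lt (hp_lt j)).ne')
        (tsub_pos_of_lt hJ).ne', fun n => ?_⟩
    have hrow : Injective (E n) := fun j j' hjj' =>
      congrArg Prod.snd (hE (a₁ := (n, j)) (a₂ := (n, j')) hjj')
    refine le_trans ?_ ((h.precomp hrow).le_measure_iInter (fun j => h_le _) (hC n) J)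
    gcongr with j
    · exact le_trans (tsub_le_tsub_left (hCp n j) 1) (one_sub_measure_compl_le μ _)
    · exact hCp n (j + J)
  have hsum : ∑' n, μ (⋂ j, C n j) = ∞ := top_le_iff.1
    ((ENNReal.tsum_const_eq_top_of_ne_zero hc).symm.trans_le (ENNReal.tsum_le_tsum hrow_lb))
  have hlimsup : ∀ᵐ ω ∂μ, ω ∈ limsup (fun n => ⋂ j, C n j) atTop :=
    (ae_iff_measure_eq (MeasurableSet.measurableSet_limsup hBmeas).nullMeasurableSet).2
      ((measure_limsup_eq_one hBmeas hrows hsum).trans measure_univ.symm)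
  filter_upwards [hlimsup] with ω hω
  exact (mem_limsup_iff_frequently_mem.1 hω).exists.imp fun n => Set.mem_iInter.1

end Independence

lemma ae_pos_of_isExpRV {Ω : Type*} [MeasurableSpace Ω] {P : Measure Ω} [IsProbabilityMeasure P]
    {X : Ω → ℝ} (hX : Measurable X) {r : ℝ} (h : IsExpRV P X r) : ∀ᵐ a ∂P, 0 < X a := by
  rw [ae_iff_measure_eq (measurableSet_lt measurable_const hX).nullMeasurableSet, measure_univ]
  simpa using h 0 le_rfl

section ExponentialWeights

variable {Ω : Type*} [MeasurableSpace Ω] {P : Measure Ω} {w : (ℤ × ℤ) × (ℤ × ℤ) → Ω → ℝ}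
  (hmeas : ∀ e, Measurable (w e))
  (hexp : ∀ e, latStep e.1 e.2 → IsExpRV P (w e) ((2 : ℝ) ^ (edgeLevel e)))
include hmeas hexp

lemma ae_forall_latStep_pos [IsProbabilityMeasure P] :
    ∀ᵐ a ∂P, ∀ e : (ℤ × ℤ) × (ℤ × ℤ), latStep e.1 e.2 → 0 < w e a := by
  refine ae_all_iff.2 fun e => ?_
  by_cases he : latStep e.1 e.2
  · filter_upwards [ae_pos_of_isExpRV (hmeas e) (hexp e he)] with a ha using fun _ => ha
  · exact ae_of_all _ fun a he' => absurd he' he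

theorem ae_exists_forall_le_of_edgeLevel (hind : iIndepFun w P) {E : ℕ → ℕ → (ℤ × ℤ) × (ℤ × ℤ)}
    (hE : Injective (uncurry E)) (hstep : ∀ n j, latStep (E n j).1 (E n j).2)
    (hlevel : ∀ n j, edgeLevel (E n j) = j + 1) {ε : ℝ} (hε : 0 < ε) :
    ∀ᵐ a ∂P, ∃ n, ∀ j, w (E n j) a ≤ ε * (j + 1) / 2 ^ (j + 1) := by
  refine ((iIndepFun_iff_iIndep _ _ P).1 hind).ae_exists_forall_mem
    (fun e => (hmeas e).comap_le) hE (C := fun n j => {a | w (E n j) a ≤ ε * (j + 1) / 2 ^ (j + 1)})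
    (fun n j => ⟨_, measurableSet_Iic, rfl⟩) (p := fun j => .ofReal (Real.exp (-ε * (j + 1))))
    (fun j => ?_) ?_ fun n j => le_of_eq ?_
  · rw [ENNReal.ofReal_lt_one, Real.exp_lt_one_iff]
    nlinarith
  · rw [← ENNReal.ofReal_tsum_of_nonneg (fun j => (Real.exp_pos _).le)
      (Real.summable_exp_nat_mul_of_ge (neg_lt_zero.2 hε) fun j => by simp)]
    exact ENNReal.ofReal_ne_top
  · have hrate : (2 : ℝ) ^ edgeLevel (E n j) = 2 ^ (j + 1) := by
      rw [hlevel, ← zpow_natCast]; push_cast; rfl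
    simp only [Set.compl_ofPred, not_le]
    rw [hexp _ (hstep n j) _ (by positivity), hrate]
    congr 2
    field_simp

end ExponentialWeights

def bdVertex (x : ℤ) : ℤ × ℤ := (2 * x, 0)

lemma bdVertex_mem_bdH (x : ℤ) : bdVertex x ∈ bdH := ⟨even_two_mul x, rfl⟩

lemma injective_rayEdge_bdVertex {f : ℕ → ℤ} (hf : Injective f) {d : ℤ × ℤ}
    (hd : d = (-1, 1) ∨ d = (1, 1)) :
    Injective (uncurry fun n j => rayEdge (bdVertex (f n)) d j) := by
  rintro ⟨n, j⟩ ⟨n', j'⟩ h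
  obtain ⟨hx, hy⟩ := Prod.ext_iff.1 (congrArg Prod.fst h)
  have hj : j = j' := by
    rcases hd with rfl | rfl <;> simpa [rayEdge, bdVertex] using hy
  subst hj
  have hfn : f n = f n' := by
    rcases hd with rfl | rfl <;> simpa [rayEdge, bdVertex] using hx
  rw [hf hfn]

lemma sum_range_le_two_mul {ε : ℝ} (hε : 0 ≤ ε) {f : ℕ → ℝ}
    (hf : ∀ j : ℕ, f j ≤ ε * (j + 1) / 2 ^ (j + 1)) (i : ℕ) :
    ∑ j ∈ Finset.range i, f j ≤ 2 * ε := by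
  have hclosed : ∑ j ∈ Finset.range i, ε * (j + 1) / 2 ^ (j + 1) = ε * (2 - (i + 2) / 2 ^ i) := by
    induction i with
    | zero => norm_num
    | succ i ih =>
      rw [Finset.sum_range_succ, ih]
      push_cast
      field_simp
      ring
  refine (Finset.sum_le_sum fun j _ => hf j).trans ?_
  rw [hclosed]
  nlinarith [show 0 ≤ ((i : ℝ) + 2) / 2 ^ i by positivity]

lemma exists_nat_forall_latStep_lt {Ω : Type*} {w : (ℤ × ℤ) × (ℤ × ℤ) → Ω → ℝ} {a : Ω}
    (hpos : ∀ e : (ℤ × ℤ) × (ℤ × ℤ), latStep e.1 e.2 → 0 < w e a) (x : ℤ × ℤ) :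
    ∃ k : ℕ, ∀ z, latStep x z → 2 * (1 / ((k : ℝ) + 1)) < w (x, z) a := by
  obtain ⟨k, hk⟩ := exists_nat_one_div_lt (half_pos (lt_min (hpos (x, x + (-1, 1)) (Or.inl rfl))
    (hpos (x, x + (1, 1)) (Or.inr rfl))))
  refine ⟨k, ?_⟩
  rintro z (rfl | rfl)
  · linarith [min_le_left (w (x, x + (-1, 1)) a) (w (x, x + (1, 1)) a)]
  · linarith [min_le_right (w (x, x + (-1, 1)) a) (w (x, x + (1, 1)) a)]

/-- In FPP on `H` with exponentially decreasing weights `ω(e) ~ Exp(2^{h(e)})`, almost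
surely there are boundary vertices `v_l < 0 < v_r` whose monotone rays
`{v_l + i·θ_r : i ≥ 0}` and `{v_r + i·θ_l : i ≥ 0}` avoid the geodesic tree `T(0)`,
confining `T(0)` to a finite triangle; in particular `T(0)` is finite. -/
theorem geoTree_finite_decreasing {Ω : Type*} [MeasurableSpace Ω] (P : Measure Ω)
    [IsProbabilityMeasure P] (w : (ℤ × ℤ) × (ℤ × ℤ) → Ω → ℝ)
    (hmeas : ∀ e, Measurable (w e))
    (hind : iIndepFun w P)
    (hexp : ∀ e, latStep e.1 e.2 → IsExpRV P (w e) ((2 : ℝ) ^ (edgeLevel e))) :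
    ∀ᵐ a ∂P, ∃ vl vr : ℤ × ℤ, vl ∈ bdH ∧ vr ∈ bdH ∧ vl.1 < 0 ∧ 0 < vr.1 ∧
      (∀ i : ℕ, vl + (i : ℤ) • ((1, 1) : ℤ × ℤ) ∉ geoTree w a) ∧
      (∀ i : ℕ, vr + (i : ℤ) • ((-1, 1) : ℤ × ℤ) ∉ geoTree w a) ∧
      (geoTree w a).Finite := by
  have hrays (f : ℕ → ℤ) (hf : Injective f) {d : ℤ × ℤ} (hd : d = (-1, 1) ∨ d = (1, 1))
      (hd2 : d.2 = 1) (k : ℕ) := ae_exists_forall_le_of_edgeLevel hmeas hexp hind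
    (injective_rayEdge_bdVertex hf hd) (fun n j => latStep_rayEdge hd _ j)
    (fun n j => edgeLevel_rayEdge rfl hd2 j) (Nat.one_div_pos_of_nat (n := k))
  filter_upwards [ae_forall_latStep_pos hmeas hexp,
    ae_all_iff.2 (hrays (fun n => -(n + 1)) (fun n n' h => by simpa using h) (Or.inr rfl) rfl),
    ae_all_iff.2 (hrays (fun n => n + 1) (fun n n' h => by simpa using h) (Or.inl rfl) rfl)]
    with a hpos hL hR
  have hw e he := (hpos e he).le
  obtain ⟨k, hk⟩ := exists_nat_forall_latStep_lt hpos (0, 0)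
  obtain ⟨nl, hnl⟩ := hL k
  obtain ⟨nr, hnr⟩ := hR k
  have hvl : (bdVertex (-(nl + 1))).1 < 0 := by simp only [bdVertex]; omega
  have hvr : 0 < (bdVertex (nr + 1)).1 := by simp only [bdVertex]; omega
  have hε : (0 : ℝ) ≤ 1 / ((k : ℝ) + 1) := by positivity
  have hl := notMem_geoTree_of_sum_rayEdge_le hw (bdVertex_mem_bdH _) hvl.ne (Or.inr rfl)
    (sum_range_le_two_mul hε hnl) hk
  have hr := notMem_geoTree_of_sum_rayEdge_le hw (bdVertex_mem_bdH _) hvr.ne' (Or.inl rfl)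
    (sum_range_le_two_mul hε hnr) hk
  exact ⟨_, _, bdVertex_mem_bdH _, bdVertex_mem_bdH _, hvl, hvr, hl, hr,
    finite_of_parent_closed (fun y hy => geoTree_eq_origin_of_snd_nonpos hy)
      (fun y hy => geoTree_exists_parent hw hy) (bdVertex_mem_bdH _) (bdVertex_mem_bdH _)
      hvl hvr hl hr⟩
end
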